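/- Let m ≥ 1 and let A, B, C be m×m matrices over F₂ such that the digital net generated by (A, B, C) is a (0,m,3)-net over F₂. Let a_i, b_i, c_i denote the i-th rows of A, B, C respectively, and for integers i, j ≥ 0 with i+j ≤ m−1 let V_{i,j} be the F₂-subspace of F₂^m spanned by a_1,…,a_i, b_1,…,b_{m−i−j−1}, c_1,…,c_j. Then for every 0 ≤ j ≤ m−1, the set ⋂_{i=0}^{m−j−1} (F₂^m \ V_{i,j}) has exactly 2^j elements. -/

import Mathlib

/-
A `(0,m,s)`-net forces, whenever `d_1 + … + d_s = m`, the first `d_i` rows of the generating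
matrices `C_i` to form a basis of `F₂^m`: a nonzero vector orthogonal to all of them would be
the digit vector of an index `l ≠ 0` whose point lies in the same elementary interval as the
point of index `0`. Hence every `V_{i,j}` is a hyperplane, and intersecting spans of sub-families
of such bases gives `⋂_{i<m-j} V_{i,j} = span(c_1, …, c_j)`, of codimension `m - j`. Over `F₂`,
the vectors outside `n` hyperplanes whose intersection has codimension `n` are the solutions of
`f_1(x) = … = f_n(x) = 1` for independent functionals, a coset of that intersection.
-/

open Matrix

/-- The vector of binary digits of `l` (least significant first). -/
def digitsVec (m l : ℕ) : Fin m → ZMod 2 := fun k => if l.testBit k.val then 1 else 0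

/-- The map φ sending a bit vector to a real number in [0,1). -/
noncomputable def phiMap (m : ℕ) (y : Fin m → ZMod 2) : ℝ :=
  ∑ k : Fin m, ((y k).val : ℝ) / 2 ^ (k.val + 1)

/-- The digital net (as a multiset of `2^m` points in `[0,1)^s`) generated by
matrices `C 0, …, C (s-1)`. -/
noncomputable def digitalNet (m s : ℕ) (C : Fin s → Matrix (Fin m) (Fin m) (ZMod 2)) :
    Multiset (Fin s → ℝ) :=
  (Multiset.range (2 ^ m)).map fun l => fun j => phiMap m ((C j).mulVec (digitsVec m l))

open Classical in
/-- `P` is a `(t,m,s)`-net over `F₂`: every elementary interval of volume `2^{t-m}`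
contains exactly `2^t` points of `P`, counted with multiplicity. -/
def IsNet (t m s : ℕ) (P : Multiset (Fin s → ℝ)) : Prop :=
  ∀ d : Fin s → ℕ, (∑ i, d i) = m - t →
    ∀ a : Fin s → ℕ, (∀ i, a i < 2 ^ d i) →
      (P.countP fun x => ∀ i,
        ((a i : ℝ) / 2 ^ d i ≤ x i ∧ x i < ((a i : ℝ) + 1) / 2 ^ d i)) = 2 ^ t

/-- The anti-diagonal matrix `J_m` over `F₂`. -/
def Jmat (m : ℕ) : Matrix (Fin m) (Fin m) (ZMod 2) :=
  Matrix.of fun i j => if i.val + j.val = m - 1 then 1 else 0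

/-- The upper-triangular Pascal matrix `P_m` over `F₂` (0-indexed entry `(i,j)` is
`binom(j,i) mod 2`). -/
def Pmat (m : ℕ) : Matrix (Fin m) (Fin m) (ZMod 2) :=
  Matrix.of fun i j => ((j.val.choose i.val : ℕ) : ZMod 2)

/-- A matrix is lower triangular. -/
def IsLowerTri {m : ℕ} (L : Matrix (Fin m) (Fin m) (ZMod 2)) : Prop :=
  ∀ i j : Fin m, i < j → L i j = 0

/-- The set consisting of the first `n` rows of `M`. -/
def rowSet {m : ℕ} (M : Matrix (Fin m) (Fin m) (ZMod 2)) (n : ℕ) :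
    Set (Fin m → ZMod 2) :=
  {x | ∃ r : Fin m, r.val < n ∧ x = M r}

/-- The subspace `V_{i,j}` spanned by the first `i` rows of `A`, the first
`m−i−j−1` rows of `B` and the first `j` rows of `C`. -/
def Vsub {m : ℕ} (A B C : Matrix (Fin m) (Fin m) (ZMod 2)) (i j : ℕ) :
    Submodule (ZMod 2) (Fin m → ZMod 2) :=
  Submodule.span (ZMod 2) (rowSet A i ∪ rowSet B (m - i - j - 1) ∪ rowSet C j)

open Module Submodule

theorem LinearIndepOn.span_image_inf_span_image {R M ι : Type*} [Ring R] [AddCommGroup M]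
    [Module R M] {v : ι → M} {u s t : Set ι} (hv : LinearIndepOn R v u) (hs : s ⊆ u)
    (ht : t ⊆ u) : span R (v '' s) ⊓ span R (v '' t) = span R (v '' (s ∩ t)) := by
  refine le_antisymm ?_ (le_inf (span_mono (Set.image_mono Set.inter_subset_left))
    (span_mono (Set.image_mono Set.inter_subset_right)))
  rintro x ⟨hxs, hxt⟩
  have hdisj : Disjoint (span R (v '' (s \ t))) (span R (v '' t)) :=
    ((linearIndepOn_union_iff Set.disjoint_sdiff_left).mp
      (hv.mono (Set.union_subset (Set.sdiff_subset.trans hs) ht))).2.2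
  rw [← Set.inter_union_sdiff s t, Set.image_union, span_union] at hxs
  obtain ⟨y, hy, z, hz, rfl⟩ := mem_sup.mp hxs
  have hzt : z ∈ span R (v '' t) := by
    simpa using sub_mem hxt (span_mono (Set.image_mono Set.inter_subset_right) hy)
  rwa [disjoint_def.mp hdisj z hz hzt, add_zero]

theorem Submodule.exists_ker_eq_of_finrank_add_one {K V : Type*} [Field K] [AddCommGroup V]
    [Module K V] [FiniteDimensional K V] (H : Submodule K V)
    (h : finrank K H + 1 = finrank K V) : ∃ f : V →ₗ[K] K, LinearMap.ker f = H := by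
  obtain ⟨f, hf, hle⟩ := H.exists_le_ker_of_lt_top (lt_top_of_finrank_lt_finrank (by omega))
  have hker : finrank K (LinearMap.ker f) < finrank K V :=
    finrank_lt (mt LinearMap.ker_eq_top.mp hf)
  exact ⟨f, (eq_of_le_of_finrank_le hle (by omega)).symm⟩

lemma ZMod.two_ne_zero_iff_eq_one (a : ZMod 2) : a ≠ 0 ↔ a = 1 := by
  revert a; decide

theorem ncard_iInter_compl_eq_two_pow_finrank {V ι : Type*} [AddCommGroup V] [Module (ZMod 2) V]
    [Finite V] (s : Finset ι) (H : ι → Submodule (ZMod 2) V)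
    (hH : ∀ i ∈ s, finrank (ZMod 2) (H i) + 1 = finrank (ZMod 2) V)
    (hinf : finrank (ZMod 2) ↥(s.inf H) + s.card = finrank (ZMod 2) V) :
    (⋂ i ∈ s, (H i : Set V)ᶜ).ncard = 2 ^ finrank (ZMod 2) ↥(s.inf H) := by
  choose f hf using fun i : s => (H i).exists_ker_eq_of_finrank_add_one (hH i i.2)
  let F : V →ₗ[ZMod 2] (s → ZMod 2) := LinearMap.pi f
  have hker : LinearMap.ker F = s.inf H := by
    rw [LinearMap.ker_pi, Finset.inf_eq_iInf, iInf_subtype']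
    exact iInf_congr hf
  have hrange : LinearMap.range F = ⊤ := by
    refine eq_top_of_finrank_eq ?_
    have := LinearMap.finrank_range_add_finrank_ker F
    rw [hker] at this
    rw [finrank_fintype_fun_eq_card, Fintype.card_coe]
    omega
  obtain ⟨x₀, hx₀⟩ : ∃ x₀, F x₀ = 1 := LinearMap.range_eq_top.mp hrange 1
  have hset : ⋂ i ∈ s, (H i : Set V)ᶜ = (x₀ + ·) '' (LinearMap.ker F : Set V) := by
    ext x
    simp only [Set.image_add_left, Set.mem_preimage, SetLike.mem_coe, LinearMap.mem_ker,
      map_add, map_neg, hx₀, neg_add_eq_zero, Set.mem_iInter, Set.mem_compl_iff]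
    rw [eq_comm, funext_iff]
    simp only [F, LinearMap.pi_apply, Pi.one_apply, ← ZMod.two_ne_zero_iff_eq_one, ne_eq,
      ← LinearMap.mem_ker, hf, Subtype.forall]
  rw [hset, Set.ncard_image_of_injective _ (add_right_injective x₀), ← hker,
    ← Nat.card_coe_set_eq, SetLike.coe_sort_coe, Module.natCard_eq_pow_finrank (K := ZMod 2),
    Nat.card_zmod]

lemma digitsVec_injOn (m : ℕ) : Set.InjOn (digitsVec m) (Set.Iio (2 ^ m)) := by
  intro l hl l' hl' h
  refine Nat.eq_of_testBit_eq fun k => ?_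
  by_cases hk : k < m
  · have := congrFun h ⟨k, hk⟩
    simp only [digitsVec] at this
    cases h1 : l.testBit k <;> cases h2 : l'.testBit k <;> simp [h1, h2] at this ⊢
  · rw [Nat.testBit_lt_two_pow (lt_of_lt_of_le hl (Nat.pow_le_pow_right two_pos (by omega))),
      Nat.testBit_lt_two_pow (lt_of_lt_of_le hl' (Nat.pow_le_pow_right two_pos (by omega)))]

lemma exists_digitsVec_eq (m : ℕ) (w : Fin m → ZMod 2) : ∃ l < 2 ^ m, digitsVec m l = w := by
  have hinj : Function.Injective fun l : Fin (2 ^ m) => digitsVec m l :=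
    fun l l' h => Fin.ext (digitsVec_injOn m l.2 l'.2 h)
  obtain ⟨l, rfl⟩ := ((Fintype.bijective_iff_injective_and_card _).mpr ⟨hinj, by simp⟩).2 w
  exact ⟨l, l.2, rfl⟩

lemma digitsVec_zero (m : ℕ) : digitsVec m 0 = 0 := by
  ext k; simp [digitsVec]

lemma sum_Ico_one_div_two_pow (d m : ℕ) (h : d ≤ m) :
    ∑ k ∈ Finset.Ico d m, (1 : ℝ) / 2 ^ (k + 1) = 1 / 2 ^ d - 1 / 2 ^ m := by
  induction m, h using Nat.le_induction with
  | base => simp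
  | succ m hdm ih =>
    rw [Finset.sum_Ico_succ_top hdm, ih]
    field_simp
    ring

lemma phiMap_nonneg (m : ℕ) (y : Fin m → ZMod 2) : 0 ≤ phiMap m y := by
  unfold phiMap; positivity

lemma phiMap_lt_of_forall_lt_eq_zero {m d : ℕ} {y : Fin m → ZMod 2}
    (hy : ∀ k : Fin m, k.val < d → y k = 0) : phiMap m y < 1 / 2 ^ d := by
  rcases le_or_gt m d with hmd | hdm
  · have : y = 0 := funext fun k => hy k (by omega)
    simp [this, phiMap]
  calc phiMap m y ≤ ∑ k : Fin m, if d ≤ k.val then (1 : ℝ) / 2 ^ (k.val + 1) else 0 := by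
        refine Finset.sum_le_sum fun k _ => ?_
        split_ifs with hk
        · gcongr
          exact_mod_cast Nat.le_of_lt_succ (ZMod.val_lt (y k))
        · simp [hy k (by omega)]
    _ = ∑ k ∈ Finset.Ico d m, (1 : ℝ) / 2 ^ (k + 1) := by
        rw [Fin.sum_univ_eq_sum_range (fun k => if d ≤ k then (1 : ℝ) / 2 ^ (k + 1) else 0),
          ← Finset.sum_filter]
        congr 1
        ext k; simp; omega
    _ < 1 / 2 ^ d := by
        rw [sum_Ico_one_div_two_pow d m hdm.le]
        have : (0 : ℝ) < 1 / 2 ^ m := by positivity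
        linarith

def leadingRows {s : ℕ} (m : ℕ) (d : Fin s → ℕ) : Set (Fin s × Fin m) :=
  {p | p.2.val < d p.1}

lemma leadingRows_mono {s m : ℕ} {d d' : Fin s → ℕ} (h : d ≤ d') :
    leadingRows m d ⊆ leadingRows m d' :=
  fun p hp => lt_of_lt_of_le hp (h p.1)

lemma leadingRows_inter {s m : ℕ} (d d' : Fin s → ℕ) :
    leadingRows m d ∩ leadingRows m d' = leadingRows m (d ⊓ d') := by
  ext p; simp [leadingRows]

lemma ncard_leadingRows {s m : ℕ} {d : Fin s → ℕ} (hd : ∀ i, d i ≤ m) :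
    (leadingRows m d).ncard = ∑ i, d i := by
  classical
  rw [leadingRows, Set.ncard_eq_toFinset_card', Set.toFinset_ofPred, Finset.card_filter,
    Fintype.sum_prod_type]
  refine Finset.sum_congr rfl fun i _ => ?_
  rw [← Finset.card_filter]
  exact Fin.card_filter_val_lt.trans (min_eq_right (hd i))

lemma eq_zero_of_isNet {m s : ℕ} {C : Fin s → Matrix (Fin m) (Fin m) (ZMod 2)}
    (hnet : IsNet 0 m s (digitalNet m s C)) {d : Fin s → ℕ} (hd : ∑ i, d i = m)
    {w : Fin m → ZMod 2} (hw : ∀ p ∈ leadingRows m d, C p.1 p.2 ⬝ᵥ w = 0) : w = 0 := by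
  obtain ⟨l, hl, rfl⟩ := exists_digitsVec_eq m w
  by_contra hne
  -- the points of index `0` and `l` both lie in the elementary interval at the origin
  -- with sides `2 ^ (-d i)`, which holds exactly one point of the net
  have hl0 : l ≠ 0 := by rintro rfl; exact hne (digitsVec_zero m)
  have hcount := hnet d (by simpa using hd) (fun _ => 0) (fun i => by positivity)
  rw [digitalNet, Multiset.countP_map, ← Finset.range_val,
    ← Finset.filter_val, Finset.card_val] at hcount
  have hbox : ∀ n, (∀ p ∈ leadingRows m d, C p.1 p.2 ⬝ᵥ digitsVec m n = 0) →
      ∀ i, ((0 : ℕ) : ℝ) / 2 ^ d i ≤ phiMap m (C i *ᵥ digitsVec m n) ∧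
        phiMap m (C i *ᵥ digitsVec m n) < ((0 : ℕ) + 1) / 2 ^ d i := fun n hn i => by
    refine ⟨by simpa using phiMap_nonneg m _, ?_⟩
    simpa using
      phiMap_lt_of_forall_lt_eq_zero (y := C i *ᵥ digitsVec m n) fun k hk => hn (i, k) hk
  obtain ⟨a, ha⟩ := Finset.card_eq_one.mp hcount
  have h0 : 0 ∈ ({a} : Finset ℕ) :=
    ha ▸ Finset.mem_filter.mpr ⟨by simp, hbox 0 fun p _ => by simp [digitsVec_zero]⟩
  have hl' : l ∈ ({a} : Finset ℕ) :=
    ha ▸ Finset.mem_filter.mpr ⟨Finset.mem_range.mpr hl, hbox l hw⟩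
  simp only [Finset.mem_singleton] at h0 hl'
  omega

lemma linearIndepOn_leadingRows {m s : ℕ} {C : Fin s → Matrix (Fin m) (Fin m) (ZMod 2)}
    (hnet : IsNet 0 m s (digitalNet m s C)) {d : Fin s → ℕ} (hd : ∑ i, d i = m) :
    LinearIndepOn (ZMod 2) (fun p : Fin s × Fin m => C p.1 p.2) (leadingRows m d) := by
  classical
  let M : Matrix (leadingRows m d) (Fin m) (ZMod 2) := fun p => C p.1.1 p.1.2
  have hinj : Function.Injective M.mulVecLin := by
    rw [← LinearMap.ker_eq_bot, LinearMap.ker_eq_bot']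
    exact fun w hw => eq_zero_of_isNet hnet hd fun p hp => congrFun hw ⟨p, hp⟩
  have hrank : M.rank = m := by
    rw [Matrix.rank, LinearMap.finrank_range_of_inj hinj, finrank_fin_fun]
  rw [Matrix.rank_eq_finrank_span_row] at hrank
  refine linearIndependent_iff_card_eq_finrank_span.mpr (Eq.trans ?_ hrank.symm)
  rw [← Nat.card_eq_fintype_card, Nat.card_coe_set_eq,
    ncard_leadingRows fun i => hd ▸ Finset.single_le_sum (fun _ _ => Nat.zero_le _)
      (Finset.mem_univ i)]
  exact hd

lemma finrank_span_leadingRows {m s : ℕ} {C : Fin s → Matrix (Fin m) (Fin m) (ZMod 2)}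
    (hnet : IsNet 0 m s (digitalNet m s C)) {d d' : Fin s → ℕ} (hdd' : d ≤ d')
    (hd' : ∑ i, d' i = m) :
    finrank (ZMod 2) (span (ZMod 2) ((fun p : Fin s × Fin m => C p.1 p.2) '' leadingRows m d))
      = ∑ i, d i := by
  classical
  have hv := (linearIndepOn_leadingRows hnet hd').mono (leadingRows_mono hdd')
  rw [Set.image_eq_range, finrank_span_eq_card hv, ← Nat.card_eq_fintype_card,
    Nat.card_coe_set_eq, ncard_leadingRows fun i => (hdd' i).trans
      (hd' ▸ Finset.single_le_sum (fun _ _ => Nat.zero_le _) (Finset.mem_univ i))]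

section ThreeMatrices

variable {m : ℕ} {A B C : Matrix (Fin m) (Fin m) (ZMod 2)}

lemma Vsub_eq_span_image (i j : ℕ) :
    Vsub A B C i j = span (ZMod 2) ((fun p : Fin 3 × Fin m => ![A, B, C] p.1 p.2) ''
      leadingRows m ![i, m - i - j - 1, j]) := by
  rw [Vsub]
  congr 1
  ext x
  simp [leadingRows, rowSet, Prod.exists, Fin.exists_fin_succ, eq_comm, or_assoc]

lemma finrank_Vsub_add_one (hnet : IsNet 0 m 3 (digitalNet m 3 ![A, B, C])) {i j : ℕ}
    (hij : i + j < m) :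
    finrank (ZMod 2) (Vsub A B C i j) + 1 = m := by
  rw [Vsub_eq_span_image, finrank_span_leadingRows hnet (d' := ![i, m - i - j - 1, j + 1])
    (fun k => by fin_cases k <;> simp) (by simp [Fin.sum_univ_three]; omega)]
  simp [Fin.sum_univ_three]
  omega

lemma inf_range_Vsub_eq_span (hnet : IsNet 0 m 3 (digitalNet m 3 ![A, B, C])) {j k : ℕ}
    (hk : k < m - j) :
    (Finset.range (k + 1)).inf (fun i => Vsub A B C i j)
      = span (ZMod 2) ((fun p : Fin 3 × Fin m => ![A, B, C] p.1 p.2) ''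
          leadingRows m ![0, m - j - 1 - k, j]) := by
  induction k with
  | zero => simp [Vsub_eq_span_image]
  | succ k ih =>
    have hindep := linearIndepOn_leadingRows hnet (d := ![k + 1, m - j - 1 - k, j])
      (by simp [Fin.sum_univ_three]; omega)
    rw [Finset.range_add_one, Finset.inf_insert, ih (by omega), Vsub_eq_span_image,
      hindep.span_image_inf_span_image (leadingRows_mono fun i => by fin_cases i <;> simp; omega)
        (leadingRows_mono fun i => by fin_cases i <;> simp), leadingRows_inter]
    congr 3
    ext i; fin_cases i <;> simp; omega

lemma finrank_inf_range_Vsub (hnet : IsNet 0 m 3 (digitalNet m 3 ![A, B, C])) {j : ℕ}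
    (hj : j < m) :
    finrank (ZMod 2) ↥((Finset.range (m - j)).inf (fun i => Vsub A B C i j)) = j := by
  obtain ⟨k, hk⟩ : ∃ k, m - j = k + 1 := ⟨m - j - 1, by omega⟩
  rw [hk, inf_range_Vsub_eq_span hnet (by omega), finrank_span_leadingRows hnet
    (d' := ![0, m - j, j]) (fun i => by fin_cases i <;> simp; omega)
    (by simp [Fin.sum_univ_three]; omega)]
  simp [Fin.sum_univ_three]
  omega

end ThreeMatrices

theorem stmt14 (m : ℕ) (hm : 1 ≤ m) (A B C : Matrix (Fin m) (Fin m) (ZMod 2))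
    (hnet : IsNet 0 m 3 (digitalNet m 3 ![A, B, C]))
    (j : ℕ) (hj : j ≤ m - 1) :
    Set.ncard (⋂ i ∈ Finset.range (m - j), ((Vsub A B C i j : Set (Fin m → ZMod 2))ᶜ))
      = 2 ^ j := by
  have hrank := finrank_inf_range_Vsub hnet (j := j) (by omega)
  rw [ncard_iInter_compl_eq_two_pow_finrank _ _
      (fun i hi => by rw [finrank_Vsub_add_one hnet (by simp at hi; omega), finrank_fin_fun])
      (by rw [hrank, Finset.card_range, finrank_fin_fun]; omega),
    hrank]
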